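/- If there exists a valid swap sequence starting from σ_0 whose last swap gives object x_n to agent 1 in exchange for her initial object x_1 (i.e., the last swap is {{1,x_1},{k,x_n}} for some agent k), then the directed graph D contains a directed path from vertex n to vertex 1. -/

import Mathlib

/-- The setting of the swap-dynamics model with `N` agents `0, 1, ..., N-1` and
`N` objects, object `j` being the object initially held by agent `j`.
Each agent has a preference list (a duplicate-free list of objects, most preferred
first), and the agents form a social network given by a simple graph. -/
structure SwapModel (N : ℕ) where
  /-- the preference list of each agent -/
  pref : Fin N → List (Fin N)
  nodup : ∀ i, (pref i).Nodup
  /-- the underlying social network -/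
  G : SimpleGraph (Fin N)

namespace SwapModel

variable {N : ℕ}

/-- Agent `i` prefers object `u` to object `v`: both appear on her preference list
and `u` appears (strictly) earlier. -/
def Prefers (M : SwapModel N) (i u v : Fin N) : Prop :=
  ∃ k l : ℕ, k < l ∧ (M.pref i)[k]? = some u ∧ (M.pref i)[l]? = some v

/-- An assignment: a bijection mapping every agent to an object on her list. -/
def IsAssignment (M : SwapModel N) (σ : Fin N → Fin N) : Prop :=
  Function.Bijective σ ∧ ∀ i, σ i ∈ M.pref i

/-- `(σ 0, σ 1, …, σ t)` is a sequence of swaps: each next assignment arises from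
the previous one by performing a swap between two adjacent agents, each of whom
prefers the object of the other agent. -/
def IsSwapSeq (M : SwapModel N) (t : ℕ) (σ : ℕ → Fin N → Fin N) : Prop :=
  M.IsAssignment (σ 0) ∧
    ∀ k, k < t → ∃ i j : Fin N, M.G.Adj i j ∧
      M.Prefers i (σ k j) (σ k i) ∧ M.Prefers j (σ k i) (σ k j) ∧
      σ (k + 1) = σ k ∘ Equiv.swap i j

end SwapModel

/-- A swap: agent `a1` gives object `o1` to agent `a2` and receives object `o2`;
this records the swap `τ = {{a1, o1}, {a2, o2}}`. -/
structure Swap (N : ℕ) where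
  a1 : Fin N
  o1 : Fin N
  a2 : Fin N
  o2 : Fin N

namespace SwapModel

variable {N : ℕ}

/-- The assignment `σ` admits the swap `τ`. -/
def Admitted (M : SwapModel N) (σ : Fin N → Fin N) (τ : Swap N) : Prop :=
  σ τ.a1 = τ.o1 ∧ σ τ.a2 = τ.o2 ∧ M.G.Adj τ.a1 τ.a2 ∧
    M.Prefers τ.a1 τ.o2 τ.o1 ∧ M.Prefers τ.a2 τ.o1 τ.o2

/-- The assignment obtained from `σ` by performing the swap `τ`. -/
def applySwap (σ : Fin N → Fin N) (τ : Swap N) : Fin N → Fin N :=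
  σ ∘ Equiv.swap τ.a1 τ.a2

/-- The assignment obtained from `σ` by performing a sequence of swaps. -/
def applySeq (σ : Fin N → Fin N) : List (Swap N) → (Fin N → Fin N)
  | [] => σ
  | τ :: φ => applySeq (applySwap σ τ) φ

/-- `φ` is a valid swap sequence for the start assignment `σ`. -/
def ValidSeq (M : SwapModel N) (σ : Fin N → Fin N) : List (Swap N) → Prop
  | [] => True
  | τ :: φ => M.Admitted σ τ ∧ M.ValidSeq (applySwap σ τ) φ

/-- Object `x` is reachable for agent `I` from the initial assignment `σ0`. -/
def Reachable (M : SwapModel N) (σ0 : Fin N → Fin N) (I x : Fin N) : Prop :=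
  ∃ φ : List (Swap N), M.ValidSeq σ0 φ ∧ applySeq σ0 φ I = x

end SwapModel

/-- The arc relation of the directed graph `D = (V, F)` with
`F = {(i,j) : {i,j} ∈ E, x_j ≻_i x_n, x_n ≻_j x_j}` (objects being identified with
the index of the agent initially holding them, and `x_n` being object `Fin.last N`). -/
def ArcD {N : ℕ} (M : SwapModel (N + 1)) (i j : Fin (N + 1)) : Prop :=
  M.G.Adj i j ∧ M.Prefers i j (Fin.last N) ∧ M.Prefers j (Fin.last N) j

/-- `D` contains a directed path from vertex `u` to vertex `v`. -/
def HasDirPathD {N : ℕ} (M : SwapModel (N + 1)) (u v : Fin (N + 1)) : Prop :=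
  ∃ (k : ℕ) (c : ℕ → Fin (N + 1)), c 0 = u ∧ c k = v ∧
    (∀ m, m < k → ArcD M (c m) (c (m + 1))) ∧
    (∀ m m', m ≤ k → m' ≤ k → c m = c m' → m = m')

/-!
Follow the object `x_n` along the swap sequence. An agent who passes it on receives something
she prefers to `x_n`, and objects only improve, so no agent holds `x_n` twice: its holders form a
simple path. When `j` receives `x_n` from `i` she gives up some `y` with `x_n ≻_j y ⪰_j x_j`; if
she later trades `x_n` for some `z ≻_j x_n`, her list of length at most three forces `y = x_j`, so
`(i, j)` is an arc of `D`. For the final holder, agent 1, the last swap gives `y = x_1` directly.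
-/

namespace SwapModel

variable {n : ℕ} {M : SwapModel n} {i u v w : Fin n}

theorem prefers_iff_idxOf_lt :
    M.Prefers i u v ↔ (M.pref i).idxOf u < (M.pref i).idxOf v ∧ v ∈ M.pref i := by
  constructor
  · rintro ⟨k, l, hkl, hk, hl⟩
    obtain ⟨hk, rfl⟩ := List.getElem?_eq_some_iff.mp hk
    obtain ⟨hl, rfl⟩ := List.getElem?_eq_some_iff.mp hl
    rw [(M.nodup i).idxOf_getElem, (M.nodup i).idxOf_getElem]
    exact ⟨hkl, List.getElem_mem _⟩
  · rintro ⟨hlt, hv⟩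
    have hu : u ∈ M.pref i :=
      List.idxOf_lt_length_iff.mp (hlt.trans (List.idxOf_lt_length_iff.mpr hv))
    exact ⟨_, _, hlt, List.getElem?_idxOf hu, List.getElem?_idxOf hv⟩

theorem Prefers.trans (huv : M.Prefers i u v) (hvw : M.Prefers i v w) : M.Prefers i u w := by
  rw [prefers_iff_idxOf_lt] at *
  exact ⟨huv.1.trans hvw.1, hvw.2⟩

theorem Prefers.irrefl : ¬ M.Prefers i u u := by
  simp [prefers_iff_idxOf_lt]

theorem Prefers.asymm (huv : M.Prefers i u v) : ¬ M.Prefers i v u :=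
  fun hvu => Prefers.irrefl (huv.trans hvu)

theorem not_prefers_chain_of_length_le_three {a b c d : Fin n} (hlen : (M.pref i).length ≤ 3)
    (hab : M.Prefers i a b) (hbc : M.Prefers i b c) (hcd : M.Prefers i c d) : False := by
  rw [prefers_iff_idxOf_lt] at hab hbc hcd
  have := List.idxOf_lt_length_iff.mpr hcd.2
  omega

instance : IsTrans (Fin n) (M.Prefers i) := ⟨fun _ _ _ => Prefers.trans⟩

theorem _root_.Relation.ReflGen.trans_prefers (huv : Relation.ReflGen (M.Prefers i) u v)
    (hvw : M.Prefers i v w) : M.Prefers i u w := by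
  rcases huv with _ | huv
  exacts [hvw, huv.trans hvw]

theorem validSeq_append {σ : Fin n → Fin n} {φ ψ : List (Swap n)} :
    M.ValidSeq σ (φ ++ ψ) ↔ M.ValidSeq σ φ ∧ M.ValidSeq (applySeq σ φ) ψ := by
  induction φ generalizing σ with
  | nil => simp [ValidSeq, applySeq]
  | cons τ φ ih => simp [ValidSeq, applySeq, ih, and_assoc]

variable {σ : Fin n → Fin n} {τ : Swap n}

theorem Admitted.reflGen_applySwap (hτ : M.Admitted σ τ) (a : Fin n) :
    Relation.ReflGen (M.Prefers a) (applySwap σ τ a) (σ a) := by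
  obtain ⟨h1, h2, -, hp1, hp2⟩ := hτ
  simp only [applySwap, Function.comp_apply]
  by_cases ha1 : a = τ.a1
  · subst ha1
    rw [Equiv.swap_apply_left, h1, h2]
    exact .single hp1
  by_cases ha2 : a = τ.a2
  · subst ha2
    rw [Equiv.swap_apply_right, h1, h2]
    exact .single hp2
  rw [Equiv.swap_apply_of_ne_of_ne ha1 ha2]

theorem Admitted.prefers_applySwap (hτ : M.Admitted σ τ) {a x : Fin n}
    (h : M.Prefers a (σ a) x) : M.Prefers a (applySwap σ τ a) x :=
  (hτ.reflGen_applySwap a).trans_prefers h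

def _root_.Swap.flip (τ : Swap n) : Swap n := ⟨τ.a2, τ.o2, τ.a1, τ.o1⟩

@[simp]
theorem applySwap_flip : applySwap σ τ.flip = applySwap σ τ := by
  simp [applySwap, Swap.flip, Equiv.swap_comm]

@[simp]
theorem admitted_flip : M.Admitted σ τ.flip ↔ M.Admitted σ τ := by
  simp only [Admitted, Swap.flip, SimpleGraph.adj_comm]
  tauto

section HolderChain

variable {N : ℕ} {M : SwapModel (N + 1)} {σ : Fin (N + 1) → Fin (N + 1)} {τ : Swap (N + 1)}
  {i j h y : Fin (N + 1)} {r : List (Fin (N + 1))}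

/-- Agent `j` received `Fin.last N` from `i` in exchange for `y`. This is an arc of `D` as soon
as `y = j`, which the length bound forces once `j` passes `Fin.last N` on. -/
def PendingArc (M : SwapModel (N + 1)) (i j y : Fin (N + 1)) : Prop :=
  M.G.Adj i j ∧ M.Prefers i y (Fin.last N) ∧ M.Prefers j (Fin.last N) y ∧
    Relation.ReflGen (M.Prefers j) y j

theorem PendingArc.arcD_self (hij : PendingArc M i j j) : ArcD M i j :=
  ⟨hij.1, hij.2.1, hij.2.2.1⟩

theorem PendingArc.arcD (hlen : (M.pref j).length ≤ 3) (hij : PendingArc M i j y)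
    {z : Fin (N + 1)} (hz : M.Prefers j z (Fin.last N)) : ArcD M i j := by
  obtain ⟨hadj, hi, hj, hy | hy⟩ := hij
  · exact ⟨hadj, hi, hj⟩
  · exact (not_prefers_chain_of_length_le_three hlen hz hj hy).elim

/-- The history of object `Fin.last N` at assignment `σ`: it is held by `h`, who got it in
exchange for `y`, and `r` lists its earlier holders, most recent first. -/
structure HolderChain (M : SwapModel (N + 1)) (σ : Fin (N + 1) → Fin (N + 1))
    (h y : Fin (N + 1)) (r : List (Fin (N + 1))) : Prop where
  injective : Function.Injective σ
  improves : ∀ a, Relation.ReflGen (M.Prefers a) (σ a) a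
  holds : σ h = Fin.last N
  nodup : (h :: r).Nodup
  getLast_eq : (h :: r).getLast (List.cons_ne_nil h r) = Fin.last N
  isChain : r.IsChain (fun a b => ArcD M b a)
  pending : ∀ c ∈ r.head?, PendingArc M c h y
  passed : ∀ a ∈ r, M.Prefers a (σ a) (Fin.last N)

theorem HolderChain.init (M : SwapModel (N + 1)) :
    HolderChain M id (Fin.last N) (Fin.last N) [] where
  injective := Function.injective_id
  improves _ := .refl
  holds := rfl
  nodup := List.nodup_singleton _
  getLast_eq := rfl
  isChain := .nil
  pending := by simp
  passed := by simp

theorem HolderChain.applySwap_of_ne (hc : HolderChain M σ h y r) (hτ : M.Admitted σ τ)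
    (h1 : h ≠ τ.a1) (h2 : h ≠ τ.a2) : HolderChain M (applySwap σ τ) h y r where
  injective := hc.injective.comp (Equiv.swap _ _).injective
  improves a := _root_.trans (hτ.reflGen_applySwap a) (hc.improves a)
  holds := by
    rw [applySwap, Function.comp_apply, Equiv.swap_apply_of_ne_of_ne h1 h2, hc.holds]
  nodup := hc.nodup
  getLast_eq := hc.getLast_eq
  isChain := hc.isChain
  pending := hc.pending
  passed a ha := hτ.prefers_applySwap (hc.passed a ha)

theorem HolderChain.applySwap_of_o1_eq_last (hlen : ∀ a, (M.pref a).length ≤ 3)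
    (hc : HolderChain M σ h y r) (hτ : M.Admitted σ τ) (ho : τ.o1 = Fin.last N) :
    HolderChain M (applySwap σ τ) τ.a2 τ.o2 (τ.a1 :: r) := by
  obtain ⟨hσ1, hσ2, hadj, hp1, hp2⟩ := id hτ
  rw [ho] at hσ1 hp1 hp2
  obtain rfl : τ.a1 = h := hc.injective (hσ1.trans hc.holds.symm)
  have hσ' : ∀ a, applySwap σ τ a = σ (Equiv.swap τ.a1 τ.a2 a) := fun _ => rfl
  refine
    { injective := hc.injective.comp (Equiv.swap _ _).injective
      improves := fun a => _root_.trans (hτ.reflGen_applySwap a) (hc.improves a)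
      holds := by rw [hσ', Equiv.swap_apply_right, hσ1]
      nodup := List.nodup_cons.mpr ⟨?_, hc.nodup⟩
      getLast_eq := by rw [List.getLast_cons (List.cons_ne_nil _ _), hc.getLast_eq]
      isChain := hc.isChain.cons fun c hcr => (hc.pending c hcr).arcD (hlen _) hp1
      pending := ?_
      passed := ?_ }
  · intro h2
    rcases List.mem_cons.mp h2 with h2 | h2
    · exact hadj.ne h2.symm
    · have := hc.passed _ h2
      rw [hσ2] at this
      exact this.asymm hp2
  · intro c hcr
    obtain rfl : τ.a1 = c := Option.some_inj.mp hcr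
    exact ⟨hadj, hp1, hp2, hσ2 ▸ hc.improves τ.a2⟩
  · intro a ha
    rcases List.mem_cons.mp ha with rfl | ha
    · rwa [hσ', Equiv.swap_apply_left, hσ2]
    · exact hτ.prefers_applySwap (hc.passed a ha)

theorem HolderChain.exists_applySwap (hlen : ∀ a, (M.pref a).length ≤ 3)
    (hc : HolderChain M σ h y r) (hτ : M.Admitted σ τ) :
    ∃ h' y' r', HolderChain M (applySwap σ τ) h' y' r' := by
  by_cases ho1 : τ.o1 = Fin.last N
  · exact ⟨_, _, _, hc.applySwap_of_o1_eq_last hlen hτ ho1⟩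
  by_cases ho2 : τ.o2 = Fin.last N
  · rw [← applySwap_flip]
    exact ⟨_, _, _, hc.applySwap_of_o1_eq_last hlen (admitted_flip.mpr hτ) ho2⟩
  refine ⟨h, y, r, hc.applySwap_of_ne hτ ?_ ?_⟩
  · rintro rfl
    exact ho1 (hτ.1.symm.trans hc.holds)
  · rintro rfl
    exact ho2 (hτ.2.1.symm.trans hc.holds)

theorem HolderChain.exists_applySeq (hlen : ∀ a, (M.pref a).length ≤ 3)
    (hc : HolderChain M σ h y r) {φ : List (Swap (N + 1))} (hφ : M.ValidSeq σ φ) :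
    ∃ h' y' r', HolderChain M (applySeq σ φ) h' y' r' := by
  induction φ generalizing σ h y r with
  | nil => exact ⟨h, y, r, hc⟩
  | cons τ φ ih =>
    obtain ⟨h', y', r', hc'⟩ := hc.exists_applySwap hlen hφ.1
    exact ih hc' hφ.2

theorem hasDirPathD_of_isChain {p : List (Fin (N + 1))} (hp : p.IsChain (ArcD M))
    (hnd : p.Nodup) {u v : Fin (N + 1)} (hu : p.head? = some u) (hv : p.getLast? = some v) :
    HasDirPathD M u v := by
  rw [List.head?_eq_getElem?] at hu
  rw [List.getLast?_eq_getElem?] at hv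
  have hpos : 0 < p.length := (List.getElem?_eq_some_iff.mp hu).1
  refine ⟨p.length - 1, fun m => p.getD m u, ?_, ?_, ?_, ?_⟩
  · simp [List.getD_eq_getElem?_getD, hu]
  · simp [List.getD_eq_getElem?_getD, hv]
  · intro m hm
    dsimp only
    rw [List.getD_eq_getElem _ _ (by omega), List.getD_eq_getElem _ _ (by omega)]
    exact List.isChain_iff_getElem.mp hp m (by omega)
  · intro m m' hm hm' he
    dsimp only at he
    rw [List.getD_eq_getElem _ _ (by omega), List.getD_eq_getElem _ _ (by omega)] at he
    exact hnd.getElem_inj_iff.mp he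

theorem HolderChain.hasDirPathD (hc : HolderChain M σ h h r) : HasDirPathD M (Fin.last N) h := by
  have hchain : (h :: r).IsChain (fun a b => ArcD M b a) :=
    hc.isChain.cons fun c hcr => (hc.pending c hcr).arcD_self
  refine hasDirPathD_of_isChain (List.isChain_reverse.mpr hchain) (List.nodup_reverse.mpr hc.nodup)
    ?_ (by simp)
  rw [List.head?_reverse, List.getLast?_eq_some_getLast (List.cons_ne_nil h r), hc.getLast_eq]

end HolderChain

end SwapModel

open SwapModel

/-- Agents are `0, …, N` (agent `0` playing the role of "agent 1"
and `Fin.last N` the role of "agent n"), every preference list has length at most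
three, and the initial assignment is `σ0 = id`.  If there is a valid swap sequence
starting from `σ0` whose last swap gives object `Fin.last N` (i.e. `x_n`) to agent `0`
in exchange for her initial object `0` (i.e. `x_1`), then the directed graph `D`
contains a directed path from vertex `Fin.last N` to vertex `0`. -/
theorem statement6 (N : ℕ) (M : SwapModel (N + 1))
    (hpref3 : ∀ i, (M.pref i).length ≤ 3)
    (φ₀ : List (Swap (N + 1))) (τ : Swap (N + 1))
    (hvalid : M.ValidSeq id (φ₀ ++ [τ]))
    (hτ : (τ.a1 = 0 ∧ τ.o1 = 0 ∧ τ.o2 = Fin.last N) ∨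
          (τ.a2 = 0 ∧ τ.o2 = 0 ∧ τ.o1 = Fin.last N)) :
    HasDirPathD M (Fin.last N) 0 := by
  obtain ⟨hφ₀, hτv, -⟩ := validSeq_append.mp hvalid
  obtain ⟨h, y, r, hc⟩ := (HolderChain.init M).exists_applySeq hpref3 hφ₀
  rcases hτ with ⟨ha, ho, ho'⟩ | ⟨ha, ho, ho'⟩
  · have hc' := hc.applySwap_of_o1_eq_last hpref3 (admitted_flip.mpr hτv) ho'
    simp only [Swap.flip, ha, ho] at hc'
    exact hc'.hasDirPathD
  · have hc' := hc.applySwap_of_o1_eq_last hpref3 hτv ho'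
    rw [ha, ho] at hc'
    exact hc'.hasDirPathD
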